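/- Let ψ ∈ [0,1) and γ ∈ (0, ψ+1). For every y ∈ (0,1), the absolutely continuous part of the structural distribution of the (γ, ψ) Gnedin–Fisher model satisfies the series identity ∑_{ξ=2}^{∞} w(ξ) · ξ(ξ−1) · y(1−y)^{ξ−2} = [Γ(γ+1−ψ)·Γ(1+ψ)/Γ(γ)] · (1−ψ)(1−γ+ψ) · y · ∑_{z=0}^{∞} (2−ψ)_z · (2−γ+ψ)_z · (1−y)^{z} / (z!·(z+1)!), and both series converge; here ξ(ξ−1)·y(1−y)^{ξ−2} is the Beta(2, ξ−1) density at y. -/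

import Mathlib

/-- Rising factorial `(x)_m = x (x+1) ⋯ (x+m-1)`, with `(x)_0 = 1`. -/
noncomputable def riseFact (x : ℝ) (m : ℕ) : ℝ := ∏ i ∈ Finset.range m, (x + i)

/-- The shifted generalized Waring mixing law of the `(γ, ψ)` Gnedin–Fisher model. -/
noncomputable def gfMix (γ ψ : ℝ) (ξ : ℕ) : ℝ :=
  Real.Gamma (γ + 1 - ψ) * Real.Gamma (1 + ψ) / Real.Gamma γ *
    (riseFact (1 - ψ) (ξ - 1) * riseFact (1 - γ + ψ) (ξ - 1)) /
    ((Nat.factorial (ξ - 1) : ℝ) * (Nat.factorial ξ : ℝ))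

lemma riseFact_succ' (x : ℝ) (m : ℕ) :
    riseFact x (m + 1) = x * riseFact (x + 1) m := by
  unfold riseFact
  rw [Finset.prod_range_succ']
  simp only [Nat.cast_zero, add_zero]
  rw [mul_comm]
  congr 1
  apply Finset.prod_congr rfl
  intro i _
  push_cast
  ring

lemma riseFact_succ (x : ℝ) (m : ℕ) :
    riseFact x (m + 1) = riseFact x m * (x + m) := Finset.prod_range_succ _ _

lemma riseFact_pos {x : ℝ} (hx : 0 < x) (m : ℕ) : 0 < riseFact x m :=
  Finset.prod_pos fun i _ => by positivity

lemma riseFact_le {x c : ℝ} (hx : 0 ≤ x) (hxc : x ≤ c) (m : ℕ) :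
    riseFact x m ≤ riseFact c m :=
  Finset.prod_le_prod (fun i _ => by positivity) (fun i _ => by linarith)

lemma riseFact_two (z : ℕ) : riseFact 2 z = (Nat.factorial (z + 1) : ℝ) := by
  induction z with
  | zero => simp [riseFact]
  | succ n ih =>
    rw [riseFact_succ, ih]
    rw [Nat.factorial_succ (n+1)]
    push_cast
    ring

lemma riseFact_three (z : ℕ) : riseFact 3 z * 2 = (Nat.factorial (z + 2) : ℝ) := by
  induction z with
  | zero => simp [riseFact]
  | succ n ih =>
    rw [riseFact_succ, show n + 1 + 2 = (n + 2) + 1 from rfl, Nat.factorial_succ]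
    push_cast
    push_cast at ih
    nlinarith [ih]

lemma gf_term_eq (γ ψ : ℝ) (y : ℝ) (j : ℕ) :
    gfMix γ ψ (j + 2) * (((j + 2 : ℕ) : ℝ) * ((j + 1 : ℕ) : ℝ)) * y * (1 - y) ^ j =
      Real.Gamma (γ + 1 - ψ) * Real.Gamma (1 + ψ) / Real.Gamma γ *
        ((1 - ψ) * (1 - γ + ψ)) * y *
        (riseFact (2 - ψ) j * riseFact (2 - γ + ψ) j * (1 - y) ^ j /
          ((Nat.factorial j : ℝ) * (Nat.factorial (j + 1) : ℝ))) := by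
  have h1 : (j + 2) - 1 = j + 1 := rfl
  set c : ℝ := Real.Gamma (γ + 1 - ψ) * Real.Gamma (1 + ψ) / Real.Gamma γ with hc
  unfold gfMix
  rw [← hc]
  rw [h1, riseFact_succ' (1 - ψ), riseFact_succ' (1 - γ + ψ)]
  have e1 : (1 : ℝ) - ψ + 1 = 2 - ψ := by ring
  have e2 : (1 : ℝ) - γ + ψ + 1 = 2 - γ + ψ := by ring
  rw [e1, e2]
  have f1 : (Nat.factorial (j + 1) : ℝ) = (j + 1) * Nat.factorial j := by
    rw [Nat.factorial_succ]; push_cast; ring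
  have f2 : (Nat.factorial (j + 2) : ℝ) = (j + 2) * Nat.factorial (j + 1) := by
    rw [show j + 2 = (j+1) + 1 from rfl, Nat.factorial_succ (j+1)]; push_cast; ring
  rw [f2, f1]
  have hj : (Nat.factorial j : ℝ) ≠ 0 := Nat.cast_ne_zero.mpr (Nat.factorial_ne_zero j)
  have hj1 : ((j : ℝ) + 1) ≠ 0 := by positivity
  have hj2 : ((j : ℝ) + 2) ≠ 0 := by positivity
  push_cast
  field_simp

/-- The absolutely continuous part of the structural distribution of the `(γ, ψ)`
Gnedin–Fisher model: `∑_{ξ≥2} w(ξ) ξ(ξ-1) y(1-y)^{ξ-2}` equals the Gauss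
hypergeometric representation, and both series converge. -/
theorem gnedin_fisher_structural_density (γ ψ : ℝ)
    (hψ0 : 0 ≤ ψ) (hψ1 : ψ < 1) (hγ0 : 0 < γ) (hγ1 : γ < ψ + 1)
    (y : ℝ) (hy0 : 0 < y) (hy1 : y < 1) :
    Summable (fun j : ℕ =>
        gfMix γ ψ (j + 2) * (((j + 2 : ℕ) : ℝ) * ((j + 1 : ℕ) : ℝ)) * y * (1 - y) ^ j) ∧
    Summable (fun z : ℕ =>
        riseFact (2 - ψ) z * riseFact (2 - γ + ψ) z * (1 - y) ^ z /
          ((Nat.factorial z : ℝ) * (Nat.factorial (z + 1) : ℝ))) ∧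
    (∑' j : ℕ,
        gfMix γ ψ (j + 2) * (((j + 2 : ℕ) : ℝ) * ((j + 1 : ℕ) : ℝ)) * y * (1 - y) ^ j) =
      Real.Gamma (γ + 1 - ψ) * Real.Gamma (1 + ψ) / Real.Gamma γ *
        ((1 - ψ) * (1 - γ + ψ)) * y *
        ∑' z : ℕ,
          riseFact (2 - ψ) z * riseFact (2 - γ + ψ) z * (1 - y) ^ z /
            ((Nat.factorial z : ℝ) * (Nat.factorial (z + 1) : ℝ)) := by
  have hr : (0:ℝ) < 1 - y := by linarith
  have hr1 : 1 - y < 1 := by linarith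
  have hA : (0:ℝ) < 2 - ψ := by linarith
  have hB : (0:ℝ) < 2 - γ + ψ := by linarith
  -- summability of the hypergeometric series
  have hsum2 : Summable (fun z : ℕ =>
      riseFact (2 - ψ) z * riseFact (2 - γ + ψ) z * (1 - y) ^ z /
        ((Nat.factorial z : ℝ) * (Nat.factorial (z + 1) : ℝ))) := by
    have hmaj : Summable (fun z : ℕ => ((z:ℝ)^2 + 3*z + 2) * (1 - y) ^ z) := by
      have hnorm : ‖(1 - y)‖ < 1 := by rw [Real.norm_eq_abs, abs_of_pos hr]; exact hr1
      have h2 := summable_pow_mul_geometric_of_norm_lt_one (R := ℝ) 2 hnorm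
      have h1 := summable_pow_mul_geometric_of_norm_lt_one (R := ℝ) 1 hnorm
      have h0 := summable_pow_mul_geometric_of_norm_lt_one (R := ℝ) 0 hnorm
      have := ((h2.add ((h1.mul_left 3))).add (h0.mul_left 2))
      refine this.congr fun z => ?_
      simp [pow_one]
      ring
    refine Summable.of_nonneg_of_le (fun z => ?_) (fun z => ?_) hmaj
    · have := riseFact_pos hA z
      have := riseFact_pos hB z
      positivity
    · have hF0 : (0:ℝ) < (Nat.factorial z : ℝ) := by
        exact_mod_cast Nat.factorial_pos z
      have hF1 : (0:ℝ) < (Nat.factorial (z+1) : ℝ) := by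
        exact_mod_cast Nat.factorial_pos (z+1)
      rw [div_le_iff₀ (by positivity)]
      have hle1 : riseFact (2 - ψ) z ≤ riseFact 2 z :=
        riseFact_le (le_of_lt hA) (by linarith) z
      have hle2 : riseFact (2 - γ + ψ) z ≤ riseFact 3 z :=
        riseFact_le (le_of_lt hB) (by linarith) z
      have hp : (0:ℝ) < (1 - y) ^ z := pow_pos hr z
      have key : riseFact 2 z * riseFact 3 z ≤
          ((z:ℝ)^2 + 3*z + 2) * ((Nat.factorial z : ℝ) * (Nat.factorial (z+1) : ℝ)) := by
        have h2 := riseFact_two z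
        have h3 := riseFact_three z
        have hf2 : (Nat.factorial (z + 2) : ℝ) = (z + 2) * ((z + 1) * Nat.factorial z) := by
          rw [show z + 2 = (z+1) + 1 from rfl, Nat.factorial_succ (z+1), Nat.factorial_succ z]
          push_cast; ring
        have : riseFact 3 z = ((z:ℝ) + 2) * ((z:ℝ) + 1) * (Nat.factorial z : ℝ) / 2 := by
          field_simp
          rw [h3, hf2]; ring
        rw [h2, this]
        have hF0' : (0:ℝ) ≤ (Nat.factorial z : ℝ) := le_of_lt hF0
        have hF1' : (0:ℝ) ≤ (Nat.factorial (z+1) : ℝ) := le_of_lt hF1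
        nlinarith [mul_pos hF0 hF1]
      calc riseFact (2 - ψ) z * riseFact (2 - γ + ψ) z * (1 - y) ^ z
          ≤ riseFact 2 z * riseFact 3 z * (1 - y) ^ z := by
            apply mul_le_mul_of_nonneg_right _ (le_of_lt hp)
            exact mul_le_mul hle1 hle2 (le_of_lt (riseFact_pos hB z))
              (le_of_lt (by rw [riseFact_two z]; exact_mod_cast Nat.factorial_pos (z+1)))
        _ ≤ ((z:ℝ)^2 + 3*z + 2) * ((Nat.factorial z : ℝ) * (Nat.factorial (z+1) : ℝ)) * (1 - y) ^ z :=
            mul_le_mul_of_nonneg_right key (le_of_lt hp)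
        _ = ((z:ℝ)^2 + 3*z + 2) * (1 - y) ^ z * ((Nat.factorial z : ℝ) * (Nat.factorial (z+1) : ℝ)) := by
            ring
  set c : ℝ := Real.Gamma (γ + 1 - ψ) * Real.Gamma (1 + ψ) / Real.Gamma γ *
      ((1 - ψ) * (1 - γ + ψ)) * y with hc
  have hsum1 : Summable (fun j : ℕ =>
      gfMix γ ψ (j + 2) * (((j + 2 : ℕ) : ℝ) * ((j + 1 : ℕ) : ℝ)) * y * (1 - y) ^ j) := by
    refine ((hsum2.mul_left c).congr fun j => ?_)
    rw [gf_term_eq, ← hc]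
  refine ⟨hsum1, hsum2, ?_⟩
  rw [tsum_congr (fun j => gf_term_eq γ ψ y j)]
  rw [show (fun j : ℕ => Real.Gamma (γ + 1 - ψ) * Real.Gamma (1 + ψ) / Real.Gamma γ *
      ((1 - ψ) * (1 - γ + ψ)) * y *
      (riseFact (2 - ψ) j * riseFact (2 - γ + ψ) j * (1 - y) ^ j /
        ((Nat.factorial j : ℝ) * (Nat.factorial (j + 1) : ℝ)))) = fun j : ℕ => c *
      (riseFact (2 - ψ) j * riseFact (2 - γ + ψ) j * (1 - y) ^ j /
        ((Nat.factorial j : ℝ) * (Nat.factorial (j + 1) : ℝ))) from rfl]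
  rw [tsum_mul_left]
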